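/- arXiv:2409.08424 — 8 statements merged into one kernel-verified Lean document; each statement's English description precedes it below -/
import Mathlib

section
/- Let C > 0 and let G be an n-vertex graph containing at least 3C·n^{t+1}·p^t copies of the star S_t. Then there exist a nonempty collection H of copies of S_t in G and vertex sets L1, L2 such that: (1) every star in H has its center in L1 and all its leaves in L2, and |H| ≥ C·n^{t+1}·p^t; (2) every vertex of L1 is the center of at least C·n^t·p^t stars in H; and (3) every vertex of L2 is a leaf of at least C·n^t·p^t stars in H. -/
/-!
Prune with `D = C·n^t·p^t`: while some vertex is the center, or a leaf, of fewer than `D` of the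
remaining stars but of at least one, delete all those stars. Each step loses fewer than `D` stars
and retires one of the `2n` roles "center `v`" / "leaf `u`" for good, so at most
`2n·D = 2C·n^{t+1}·p^t` stars are lost and at least `C·n^{t+1}·p^t` remain.
-/

open Finset

theorem Finset.exists_subset_card_le_add_and_filter_card_ge {α β : Type*} [DecidableEq β]
    (P : β → α → Prop) [∀ b, DecidablePred (P b)] {D : ℝ} (hD : 0 ≤ D) (T : Finset β) :
    ∀ S : Finset α, (∀ b ∉ T, ∀ a ∈ S, ¬ P b a) →
      ∃ H ⊆ S, (#S : ℝ) ≤ #H + D * #T ∧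
        ∀ b, (H.filter (P b)).Nonempty → D ≤ #(H.filter (P b)) := by
  induction T using Finset.strongInduction with
  | H T ih =>
    intro S hT
    by_cases hsparse : ∃ b, (S.filter (P b)).Nonempty ∧ (#(S.filter (P b)) : ℝ) < D
    · obtain ⟨b, ⟨a, ha⟩, hlt⟩ := hsparse
      rw [mem_filter] at ha
      have hbT : b ∈ T := by_contra fun hb => hT b hb a ha.1 ha.2
      obtain ⟨H, hHS, hcard, hdense⟩ := ih (T.erase b) (erase_ssubset hbT)
        (S.filter (¬ P b ·)) fun c hc a' ha' => by
          rw [mem_filter] at ha'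
          by_cases hcb : c = b
          · exact hcb ▸ ha'.2
          · exact hT c (fun hcT => hc (mem_erase.mpr ⟨hcb, hcT⟩)) a' ha'.1
      refine ⟨H, hHS.trans (filter_subset _ _), ?_, hdense⟩
      have hsplit : (#S : ℝ) = #(S.filter (P b)) + #(S.filter (¬ P b ·)) := by
        exact_mod_cast (card_filter_add_card_filter_not (P b)).symm
      have hTcard : (#T : ℝ) = #(T.erase b) + 1 := by
        exact_mod_cast (card_erase_add_one hbT).symm
      rw [hsplit, hTcard]
      linarith
    · push Not at hsparse
      exact ⟨S, Subset.refl S, le_add_of_nonneg_right (by positivity), hsparse⟩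

def starTest {V : Type*} : V ⊕ V → V × Finset V → Prop
  | .inl v, q => q.1 = v
  | .inr u, q => u ∈ q.2

instance {V : Type*} [DecidableEq V] : ∀ b, DecidablePred (starTest (V := V) b)
  | .inl v => fun q => inferInstanceAs (Decidable (q.1 = v))
  | .inr u => fun q => inferInstanceAs (Decidable (u ∈ q.2))

theorem star_pruning_general {V : Type*} [Fintype V] [DecidableEq V]
    (t : ℕ)
    (hn : 0 < Fintype.card V)
    (p C : ℝ) (hp : 0 < p) (hC : 0 < C)
    (copies : Finset (V × Finset V))
    (hmany : 3 * C * (Fintype.card V : ℝ) ^ (t + 1) * p ^ t ≤ copies.card) :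
    ∃ H ⊆ copies, ∃ L1 L2 : Finset V,
      H.Nonempty ∧
      (∀ q ∈ H, q.1 ∈ L1 ∧ q.2 ⊆ L2) ∧
      C * (Fintype.card V : ℝ) ^ (t + 1) * p ^ t ≤ H.card ∧
      (∀ v ∈ L1, C * (Fintype.card V : ℝ) ^ t * p ^ t ≤ (H.filter (fun q => q.1 = v)).card) ∧
      (∀ u ∈ L2, C * (Fintype.card V : ℝ) ^ t * p ^ t ≤ (H.filter (fun q => u ∈ q.2)).card) := by
  set n := Fintype.card V
  obtain ⟨H, hHS, hcard, hdense⟩ := exists_subset_card_le_add_and_filter_card_ge starTest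
    (D := C * n ^ t * p ^ t) (by positivity) univ copies (by simp)
  have hlarge : C * (n : ℝ) ^ (t + 1) * p ^ t ≤ #H := by
    have hT : (#(univ : Finset (V ⊕ V)) : ℝ) = 2 * n := by simp [n, two_mul]
    have hloss : C * (n : ℝ) ^ t * p ^ t * (2 * n) = 2 * (C * (n : ℝ) ^ (t + 1) * p ^ t) := by
      ring
    rw [hT, hloss] at hcard
    linarith
  have hpos : 0 < C * (n : ℝ) ^ (t + 1) * p ^ t := by positivity
  refine ⟨H, hHS, H.image Prod.fst, H.biUnion Prod.snd,
    card_pos.mp (by exact_mod_cast hpos.trans_le hlarge),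
    fun q hq => ⟨mem_image_of_mem _ hq, fun u hu => mem_biUnion.mpr ⟨q, hq, hu⟩⟩, hlarge, ?_, ?_⟩
  · intro v hv
    obtain ⟨q, hq, rfl⟩ := mem_image.mp hv
    exact hdense (.inl q.1) ⟨q, mem_filter.mpr ⟨hq, rfl⟩⟩
  · intro u hu
    obtain ⟨q, hq, hu⟩ := mem_biUnion.mp hu
    exact hdense (.inr u) ⟨q, mem_filter.mpr ⟨hq, hu⟩⟩

/-- Pruning lemma for stars: a graph on `n ≥ 1` vertices with at least `3C·n^{t+1}·p^t`
copies of the star `S_t` contains a nonempty collection `H` of copies of `S_t`, with all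
centers in `L1` and all leaves in `L2`, such that `|H| ≥ C·n^{t+1}·p^t`, every vertex of
`L1` is the center of at least `C·n^t·p^t` stars of `H`, and every vertex of `L2` is a
leaf of at least `C·n^t·p^t` stars of `H`. -/
theorem star_pruning {V : Type*} [Fintype V] [DecidableEq V]
    (G : SimpleGraph V) [DecidableRel G.Adj] (t : ℕ) (ht : 1 ≤ t)
    (hn : 0 < Fintype.card V)
    (p C : ℝ) (hp : 0 < p) (hC : 0 < C)
    (copies : Finset (V × Finset V))
    (hcopies : copies = ((Finset.univ : Finset V) ×ˢ (Finset.univ : Finset (Finset V))).filter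
      (fun q : V × Finset V => q.2 ⊆ G.neighborFinset q.1 ∧ q.2.card = t))
    (hmany : 3 * C * (Fintype.card V : ℝ) ^ (t + 1) * p ^ t ≤ copies.card) :
    ∃ H ⊆ copies, ∃ L1 L2 : Finset V,
      H.Nonempty ∧
      (∀ q ∈ H, q.1 ∈ L1 ∧ q.2 ⊆ L2) ∧
      C * (Fintype.card V : ℝ) ^ (t + 1) * p ^ t ≤ H.card ∧
      (∀ v ∈ L1, C * (Fintype.card V : ℝ) ^ t * p ^ t ≤ (H.filter (fun q => q.1 = v)).card) ∧
      (∀ u ∈ L2, C * (Fintype.card V : ℝ) ^ t * p ^ t ≤ (H.filter (fun q => u ∈ q.2)).card) :=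
  star_pruning_general t hn p C hp hC copies hmany
end

section
/- Let t ≥ 2 and let G be an n-vertex graph with at least t·n^t·p^{C(t,2)} copies of K_t, and with at most n^i·p^{C(i,2)} copies of K_i for every 1 ≤ i < t, where p > 0. Let 𝒢 be the t-complex of all cliques of G on at most t vertices. Then there exists a sub-t-complex 𝒢' ⊆ 𝒢 such that for every i < t and every K ∈ 𝒢'_i, the number of t-sets of 𝒢'_t containing K is at least n^{t−i}·p^{C(t,2)−C(i,2)}, and |𝒢'_t| ≥ n^t·p^{C(t,2)}. -/
/-! Greedy pruning. Starting from all `t`-cliques, as long as some nonempty clique `K` with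
`#K = i < t` has degree below `d_i = n^(t-i) p^(C(t,2)-C(i,2))`, delete every `t`-clique
containing `K`. Each `K` triggers this at most once (afterwards its degree is `0`) and costs
fewer than `d_i` top sets, so at most `∑_{1 ≤ i < t} #(i-cliques) · d_i ≤ (t-1) n^t p^C(t,2)`
top sets are lost. The nonempty subsets of the surviving `t`-cliques form the required complex. -/

open Finset

theorem exists_subset_forall_le_card_filter_subset {α : Type*} [DecidableEq α]
    (A : Finset (Finset α)) (d : Finset α → ℝ) (hd : ∀ K ∈ A, 0 ≤ d K) :
    ∀ T : Finset (Finset α), ∃ T' ⊆ T,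
      (∀ K ∈ A, (∃ L ∈ T', K ⊆ L) → d K ≤ #{L ∈ T' | K ⊆ L}) ∧
      (#T : ℝ) ≤ #T' + ∑ K ∈ A, d K := by
  induction A using Finset.strongInduction with
  | H A ih =>
  intro T
  by_cases hbad : ∃ K ∈ A, (#{L ∈ T | K ⊆ L} : ℝ) < d K
  · obtain ⟨K, hKA, hK⟩ := hbad
    obtain ⟨T', hT'T, hdeg, hcard⟩ := ih (A.erase K) (erase_ssubset hKA)
      (fun K' hK' => hd K' (mem_of_mem_erase hK')) {L ∈ T | ¬K ⊆ L}
    refine ⟨T', hT'T.trans (filter_subset _ _), fun K' hK'A hK'T' => ?_, ?_⟩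
    · obtain rfl | hne := eq_or_ne K' K
      · obtain ⟨L, hL, hKL⟩ := hK'T'
        exact absurd hKL (mem_filter.1 (hT'T hL)).2
      · exact hdeg K' (mem_erase.2 ⟨hne, hK'A⟩) hK'T'
    · have hsplit : (#{L ∈ T | K ⊆ L} : ℝ) + #{L ∈ T | ¬K ⊆ L} = #T := by
        exact_mod_cast card_filter_add_card_filter_not _
      rw [← add_sum_erase A d hKA]
      linarith
  · push Not at hbad
    exact ⟨T, subset_rfl, fun K hK _ => hbad K hK,
      le_add_of_nonneg_right (sum_nonneg hd)⟩

section DownwardClosure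

variable {α : Type*} [DecidableEq α]

def nonemptyDownClosure (T : Finset (Finset α)) : Finset (Finset α) :=
  T.biUnion fun L => {K ∈ L.powerset | K.Nonempty}

variable {T : Finset (Finset α)} {K : Finset α}

theorem mem_nonemptyDownClosure :
    K ∈ nonemptyDownClosure T ↔ K.Nonempty ∧ ∃ L ∈ T, K ⊆ L := by
  simp only [nonemptyDownClosure, mem_biUnion, mem_filter, mem_powerset]
  tauto

theorem filter_card_eq_nonemptyDownClosure {t : ℕ} (ht : t ≠ 0) (hT : ∀ L ∈ T, #L = t) :
    {L ∈ nonemptyDownClosure T | #L = t} = T := by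
  ext L
  simp only [mem_filter, mem_nonemptyDownClosure]
  constructor
  · rintro ⟨⟨-, M, hM, hLM⟩, hL⟩
    rwa [eq_of_subset_of_card_le hLM (by rw [hT M hM, hL])]
  · intro hL
    exact ⟨⟨card_pos.1 (by rw [hT L hL]; omega), L, hL, subset_rfl⟩, hT L hL⟩

end DownwardClosure

theorem SimpleGraph.sum_cliqueFinset_Ico_le {V : Type*} [Fintype V] [DecidableEq V]
    (G : SimpleGraph V) [DecidableRel G.Adj] {t : ℕ} (x y : ℝ) (hx : 0 ≤ x) (hy : 0 ≤ y)
    (hcard : ∀ i, 1 ≤ i → i < t → (#(G.cliqueFinset i) : ℝ) ≤ x ^ i * y ^ i.choose 2) :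
    ∑ K ∈ (Ico 1 t).biUnion G.cliqueFinset, x ^ (t - #K) * y ^ (t.choose 2 - (#K).choose 2) ≤
      (t - 1 : ℕ) * (x ^ t * y ^ t.choose 2) := by
  have hdisj : (Ico 1 t : Set ℕ).PairwiseDisjoint G.cliqueFinset :=
    fun i _ j _ hij => Finset.disjoint_left.2 fun K hi hj =>
      hij ((mem_cliqueFinset_iff.1 hi).card_eq.symm.trans
        (mem_cliqueFinset_iff.1 hj).card_eq)
  rw [sum_biUnion hdisj, ← Nat.card_Ico 1 t, ← nsmul_eq_mul, ← sum_const]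
  refine sum_le_sum fun i hi => ?_
  obtain ⟨h1i, hit⟩ := mem_Ico.1 hi
  calc ∑ K ∈ G.cliqueFinset i, x ^ (t - #K) * y ^ (t.choose 2 - (#K).choose 2)
      = #(G.cliqueFinset i) * (x ^ (t - i) * y ^ (t.choose 2 - i.choose 2)) := by
        rw [sum_congr rfl fun K hK => by rw [(mem_cliqueFinset_iff.1 hK).card_eq],
          sum_const, nsmul_eq_mul]
    _ ≤ x ^ i * y ^ i.choose 2 * (x ^ (t - i) * y ^ (t.choose 2 - i.choose 2)) := by
        gcongr
        exact hcard i h1i hit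
    _ = x ^ t * y ^ t.choose 2 := by
        rw [mul_mul_mul_comm, ← pow_add, ← pow_add, Nat.add_sub_cancel' hit.le,
          Nat.add_sub_cancel' (Nat.choose_le_choose 2 hit.le)]

/-- Pruning lemma for clique complexes: if an `n`-vertex graph has at least
`t·n^t·p^{C(t,2)}` copies of `K_t` and at most `n^i·p^{C(i,2)}` copies of `K_i` for all
`1 ≤ i < t`, then the `t`-complex of its cliques of size at most `t` has a sub-`t`-complex
`𝒢'` in which every set of size `i < t` has degree (number of `t`-sets of `𝒢'` containing
it) at least `n^{t-i}·p^{C(t,2)-C(i,2)}`, and the top level has at least `n^t·p^{C(t,2)}`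
sets. -/
theorem clique_complex_pruning {V : Type*} [Fintype V] [DecidableEq V]
    (G : SimpleGraph V) [DecidableRel G.Adj] (t : ℕ) (ht : 2 ≤ t) (p : ℝ) (hp : 0 < p)
    (hKt : (t : ℝ) * (Fintype.card V : ℝ) ^ t * p ^ t.choose 2 ≤ (G.cliqueFinset t).card)
    (hKi : ∀ i, 1 ≤ i → i < t →
      ((G.cliqueFinset i).card : ℝ) ≤ (Fintype.card V : ℝ) ^ i * p ^ i.choose 2) :
    ∃ 𝒢' : Finset (Finset V),
      (∀ K ∈ 𝒢', K.Nonempty ∧ K.card ≤ t ∧ G.IsClique (K : Set V)) ∧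
      (∀ K ∈ 𝒢', ∀ K' : Finset V, K' ⊆ K → K'.Nonempty → K' ∈ 𝒢') ∧
      (∀ i, i < t → ∀ K ∈ 𝒢', K.card = i →
        (Fintype.card V : ℝ) ^ (t - i) * p ^ (t.choose 2 - i.choose 2) ≤
          ((𝒢'.filter (fun L => L.card = t ∧ K ⊆ L)).card : ℝ)) ∧
      (Fintype.card V : ℝ) ^ t * p ^ t.choose 2 ≤
        ((𝒢'.filter (fun L => L.card = t)).card : ℝ) := by
  obtain ⟨T, hT, hdeg, hpruned⟩ := exists_subset_forall_le_card_filter_subset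
    ((Ico 1 t).biUnion G.cliqueFinset)
    (fun K => (Fintype.card V : ℝ) ^ (t - #K) * p ^ (t.choose 2 - (#K).choose 2))
    (fun K _ => by positivity) (G.cliqueFinset t)
  have hTclique : ∀ L ∈ T, G.IsNClique t L := fun L hL =>
    SimpleGraph.mem_cliqueFinset_iff.1 (hT hL)
  have htop := filter_card_eq_nonemptyDownClosure (by omega) fun L hL => (hTclique L hL).card_eq
  have hclique (K) (hK : K ∈ nonemptyDownClosure T) :
      K.Nonempty ∧ #K ≤ t ∧ G.IsClique (K : Set V) := by
    obtain ⟨hKne, L, hL, hKL⟩ := mem_nonemptyDownClosure.1 hK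
    exact ⟨hKne, (hTclique L hL).card_eq ▸ card_le_card hKL,
      (hTclique L hL).isClique.subset (coe_subset.2 hKL)⟩
  refine ⟨nonemptyDownClosure T, hclique, fun K hK K' hK'K hK' => ?_,
    fun i hi K hK hKcard => ?_, ?_⟩
  · obtain ⟨-, L, hL, hKL⟩ := mem_nonemptyDownClosure.1 hK
    exact mem_nonemptyDownClosure.2 ⟨hK', L, hL, hK'K.trans hKL⟩
  · obtain ⟨hKne, -, hKclique⟩ := hclique K hK
    have hKA : K ∈ (Ico 1 t).biUnion G.cliqueFinset := mem_biUnion.2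
      ⟨i, mem_Ico.2 ⟨hKcard ▸ card_pos.2 hKne, hi⟩,
        SimpleGraph.mem_cliqueFinset_iff.2 ⟨hKclique, hKcard⟩⟩
    rw [← filter_filter, htop, ← hKcard]
    exact hdeg K hKA (mem_nonemptyDownClosure.1 hK).2
  · have hsum := G.sum_cliqueFinset_Ico_le _ _ (Nat.cast_nonneg _) hp.le hKi
    rw [Nat.cast_sub (by omega), Nat.cast_one] at hsum
    rw [htop]
    linarith
end

section
/- Let T be an r-vertex K_t-tree with a witness of type d⃗ and glue size at most s. The number of copies of this witness in a (t,s,ℓ,r,B⃗)-strong-builder 𝒢 is at least |𝒢_t| · Π_{k=1}^{s} B_k^{d_k}. -/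
open Finset

/-- A `t`-complex: a collection of nonempty sets of size at most `t`, closed under
taking nonempty subsets. -/
def IsTComplex {V : Type*} (t : ℕ) (𝒢 : Finset (Finset V)) : Prop :=
  ∀ K ∈ 𝒢, K.Nonempty ∧ K.card ≤ t ∧ ∀ K' : Finset V, K' ⊆ K → K'.Nonempty → K' ∈ 𝒢

/-- Degree of `K` in the `t`-complex `𝒢`. -/
def complexDeg {V : Type*} [DecidableEq V] (t : ℕ) (𝒢 : Finset (Finset V))
    (K : Finset V) : ℕ :=
  (𝒢.filter (fun L => L.card = t ∧ K ⊆ L)).card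

/-- A `(t,s,ℓ,B)`-weak-builder. -/
def IsWeakBuilder {V : Type*} [DecidableEq V] (t s ℓ : ℕ) (B : ℕ → ℕ)
    (𝒢 : Finset (Finset V)) : Prop :=
  IsTComplex t 𝒢 ∧
  (∀ i, 1 ≤ i → i ≤ s → ∀ K ∈ 𝒢, K.card = i → B i ≤ complexDeg t 𝒢 K) ∧
  (∀ K ∈ 𝒢, K.card = s + 1 → complexDeg t 𝒢 K ≤ ℓ)

/-- `𝒢 \ S` for a `t`-complex. -/
def complexRemove {V : Type*} [DecidableEq V] (𝒢 : Finset (Finset V)) (S : Finset V) :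
    Finset (Finset V) :=
  (𝒢.filter (fun K => ¬ K ⊆ S)).image (fun K => K \ S)

/-- A `(t,s,ℓ,r,B)`-strong-builder. -/
def IsStrongBuilder {V : Type*} [DecidableEq V] (t s ℓ r : ℕ) (B : ℕ → ℕ)
    (𝒢 : Finset (Finset V)) : Prop :=
  ∀ S : Finset V, S.card ≤ r → IsWeakBuilder t s ℓ B (complexRemove 𝒢 S)

/-- Extend an injection on `U` by a bijection from `D` onto `N'`. -/
lemma extend_inj {V W : Type*} [DecidableEq V] [DecidableEq W]
    (f : V → W) (U D : Finset V) (N' : Finset W)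
    (hinj : Set.InjOn f ↑U) (hD : Disjoint D U) (hcard : D.card = N'.card)
    (hdisj : ∀ w ∈ N', w ∉ U.image f) :
    ∃ g : V → W, Set.InjOn g ↑(U ∪ D) ∧ (∀ v ∈ U, g v = f v) ∧ D.image g = N' := by
  classical
  obtain ⟨e⟩ : Nonempty ({x // x ∈ D} ≃ {x // x ∈ N'}) := ⟨Finset.equivOfCardEq hcard⟩
  refine ⟨fun v => if h : v ∈ D then (e ⟨v, h⟩ : W) else f v, ?_, ?_, ?_⟩
  · intro x hx y hy hxy
    simp only [coe_union, Set.mem_union, mem_coe] at hx hy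
    by_cases hxD : x ∈ D <;> by_cases hyD : y ∈ D
    · simp only [dif_pos hxD, dif_pos hyD] at hxy
      exact congrArg Subtype.val (e.injective (Subtype.ext hxy))
    · exfalso
      have hyU : y ∈ U := hy.resolve_right hyD
      simp only [dif_pos hxD, dif_neg hyD] at hxy
      exact hdisj _ (e ⟨x, hxD⟩).2 (hxy ▸ mem_image_of_mem f hyU)
    · exfalso
      have hxU : x ∈ U := hx.resolve_right hxD
      simp only [dif_neg hxD, dif_pos hyD] at hxy
      exact hdisj _ (e ⟨y, hyD⟩).2 (hxy ▸ mem_image_of_mem f hxU)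
    · have hxU : x ∈ U := hx.resolve_right hxD
      have hyU : y ∈ U := hy.resolve_right hyD
      simp only [dif_neg hxD, dif_neg hyD] at hxy
      exact hinj hxU hyU hxy
  · intro v hv
    have : v ∉ D := fun h => (Finset.disjoint_left.mp hD h) hv
    simp [this]
  · apply Finset.eq_of_subset_of_card_le
    · intro w hw
      simp only [mem_image] at hw
      obtain ⟨v, hv, rfl⟩ := hw
      simp only [dif_pos hv]
      exact (e ⟨v, hv⟩).2
    · rw [Finset.card_image_of_injOn, hcard]
      intro x hx y hy hxy
      simp only [mem_coe] at hx hy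
      simp only [dif_pos hx, dif_pos hy] at hxy
      exact congrArg Subtype.val (e.injective (Subtype.ext hxy))

/-- Building lemma: an `r`-vertex `K_t`-tree `T` with a witness of type `d⃗` and glue
size at most `s` has at least `|𝒢_t| · Π_{k=1}^s B_k^{d_k}` copies of that witness in
any `(t,s,ℓ,r,B)`-strong-builder `𝒢`, where a copy is a tuple `(L⁽¹⁾,…,L⁽ᵇ⁾)` of
`t`-sets of `𝒢` admitting a bijection of `V(T)` onto their union carrying each
`V(K⁽ⁱ⁾)` to `L⁽ⁱ⁾`. -/
theorem building_lemma {V : Type*} [Fintype V] [DecidableEq V]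
    (T : SimpleGraph V) [DecidableRel T.Adj] (t s ℓ r b : ℕ) (hb : 1 ≤ b)
    (hr : Fintype.card V = r)
    (K : Fin b → Finset V) (j : Fin b → Fin b)
    (hclique : ∀ i, T.IsNClique t (K i))
    (hcoverV : ∀ v : V, ∃ i, v ∈ K i)
    (hcoverE : ∀ u v : V, T.Adj u v → ∃ i, u ∈ K i ∧ v ∈ K i)
    (hj : ∀ i : Fin b, (i : ℕ) ≠ 0 → j i < i)
    (hint : ∀ i : Fin b, (i : ℕ) ≠ 0 → ∀ i' : Fin b, i' < i → K i ∩ K i' ⊆ K i ∩ K (j i))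
    (hne : ∀ i : Fin b, (i : ℕ) ≠ 0 → (K i ∩ K (j i)).Nonempty)
    (hproper : ∀ i : Fin b, (i : ℕ) ≠ 0 → K i ∩ K (j i) ≠ K i)
    (hglue : ∀ i : Fin b, (i : ℕ) ≠ 0 → (K i ∩ K (j i)).card ≤ s)
    (d : ℕ → ℕ)
    (hd : ∀ k, d k = (Finset.univ.filter
      (fun i : Fin b => (i : ℕ) ≠ 0 ∧ (K i ∩ K (j i)).card = k)).card)
    {W : Type*} [DecidableEq W] (B : ℕ → ℕ) (𝒢 : Finset (Finset W))
    (hstrong : IsStrongBuilder t s ℓ r B 𝒢) :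
    (𝒢.filter (fun L => L.card = t)).card * ∏ k ∈ Finset.Icc 1 s, B k ^ d k ≤
      Nat.card { L : Fin b → Finset W //
        (∀ i, L i ∈ 𝒢 ∧ (L i).card = t) ∧
        ∃ f : V → W, Function.Injective f ∧ ∀ i, (K i).image f = L i } := by
  classical
  have hKcard : ∀ i, (K i).card = t := fun i => (hclique i).card_eq
  -- facts about 𝒢 from the empty removal
  have hrem0 : complexRemove 𝒢 ∅ = 𝒢.filter (fun X => X.Nonempty) := by
    ext A
    simp only [complexRemove, mem_image, mem_filter, Finset.subset_empty, Finset.sdiff_empty,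
      Finset.nonempty_iff_ne_empty]
    constructor
    · rintro ⟨X, ⟨hX, hXne⟩, rfl⟩; exact ⟨hX, hXne⟩
    · rintro ⟨hA, hAne⟩; exact ⟨A, ⟨hA, hAne⟩, rfl⟩
  have hTC : IsTComplex t (complexRemove 𝒢 ∅) := (hstrong ∅ (by simp)).1
  have hcard_le : ∀ A ∈ 𝒢, A.Nonempty → A.card ≤ t := by
    intro A hA hAne
    have := hTC A (by rw [hrem0]; exact mem_filter.mpr ⟨hA, hAne⟩)
    exact this.2.1
  have hclosed : ∀ A ∈ 𝒢, A.Nonempty → ∀ A' ⊆ A, A'.Nonempty → A' ∈ 𝒢 := by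
    intro A hA hAne A' hsub hne'
    have := (hTC A (by rw [hrem0]; exact mem_filter.mpr ⟨hA, hAne⟩)).2.2 A' hsub hne'
    rw [hrem0] at this
    exact (mem_filter.mp this).1
  -- the partially-embedded vertex sets
  set U : ℕ → Finset V := fun m => (Finset.univ.filter (fun i : Fin b => (i : ℕ) < m)).biUnion K
    with hU
  have hUmono : ∀ {m m'}, m ≤ m' → U m ⊆ U m' := by
    intro m m' h
    apply Finset.biUnion_subset_biUnion_of_subset_left
    intro i hi
    simp only [mem_filter, mem_univ, true_and] at hi ⊢
    omega
  have hKU : ∀ (i : Fin b) m, (i : ℕ) < m → K i ⊆ U m := by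
    intro i m him
    exact Finset.subset_biUnion_of_mem K (by simp [him])
  -- the partial-copy predicate and sets
  set P : ℕ → (Fin b → Finset W) → Prop := fun m L =>
    (∀ i : Fin b, (i : ℕ) < m → L i ∈ 𝒢 ∧ (L i).card = t) ∧
    (∀ i : Fin b, m ≤ (i : ℕ) → L i = ∅) ∧
    ∃ f : V → W, Set.InjOn f ↑(U m) ∧ ∀ i : Fin b, (i : ℕ) < m → (K i).image f = L i
    with hP
  set A : ℕ → Finset (Fin b → Finset W) := fun m =>
    (Fintype.piFinset fun _ : Fin b => insert ∅ (𝒢.filter fun X => X.card = t)).filter (P m)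
    with hA
  have hmemA : ∀ m L, L ∈ A m ↔ P m L := by
    intro m L
    constructor
    · exact fun h => (mem_filter.mp h).2
    · intro h
      refine mem_filter.mpr ⟨Fintype.mem_piFinset.mpr fun i => ?_, h⟩
      by_cases hi : (i : ℕ) < m
      · exact mem_insert_of_mem (mem_filter.mpr (h.1 i hi))
      · rw [h.2.1 i (le_of_not_gt hi)]; exact mem_insert_self _ _
  set i0 : Fin b := ⟨0, hb⟩ with hi0
  have hi0v : (i0 : ℕ) = 0 := rfl
  have hU1 : U 1 = K i0 := by
    apply Finset.Subset.antisymm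
    · intro v hv
      simp only [hU, mem_biUnion, mem_filter, mem_univ, true_and] at hv
      obtain ⟨i, hi, hvi⟩ := hv
      have hii : i = i0 := Fin.ext (by rw [hi0v]; omega)
      rwa [hii] at hvi
    · exact hKU i0 1 (by simp [hi0])
  have hbase : (𝒢.filter (fun X => X.card = t)).card ≤ (A 1).card := by
    apply Finset.card_le_card_of_injOn
      (fun X => fun i' : Fin b => if (i' : ℕ) = 0 then X else ∅)
    · intro X hX
      simp only [mem_coe, mem_filter] at hX ⊢
      rw [hmemA]
      refine ⟨?_, ?_, ?_⟩
      · intro i hi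
        have hi' : (i : ℕ) = 0 := by omega
        simp only [hi', if_pos rfl]
        exact ⟨hX.1, hX.2⟩
      · intro i hi
        have hi' : (i : ℕ) ≠ 0 := by omega
        simp [hi']
      · have hKX : (K i0).card = X.card := by rw [hKcard, hX.2]
        by_cases hV : IsEmpty V
        · refine ⟨fun x => (hV.false x).elim, ?_, ?_⟩
          · intro x hx; exact ((hV.false x).elim)
          · intro i hi
            have hii : i = i0 := Fin.ext (by rw [hi0v]; omega)
            have hK0 : K i0 = ∅ := Finset.eq_empty_of_forall_notMem (fun v _ => (hV.false v))
            have hX0 : X = ∅ := by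
              rw [← Finset.card_eq_zero, ← hKX, hK0, Finset.card_empty]
            simp [hK0, hii, hX0]
        · have hVne : Nonempty V := not_isEmpty_iff.mp hV
          obtain ⟨v0⟩ := hVne
          obtain ⟨iv, hiv⟩ := hcoverV v0
          have ht1 : 1 ≤ t := by
            have h1 := hKcard iv
            have h2 : 0 < (K iv).card := Finset.card_pos.mpr ⟨v0, hiv⟩
            omega
          have hXne : X.Nonempty := by rw [← Finset.card_pos, hX.2]; omega
          obtain ⟨w0, _⟩ := hXne
          obtain ⟨g, hg1, hg2, hg3⟩ := extend_inj (fun _ => w0) ∅ (K i0) X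
            (by simp) (by simp) (by rw [hKX]) (by simp)
          refine ⟨g, ?_, ?_⟩
          · rw [hU1]
            simpa using hg1
          · intro i hi
            have hii : i = i0 := Fin.ext (by rw [hi0v]; omega)
            rw [hii]
            simpa [hi0] using hg3
    · intro X hX Y hY h
      have := congrFun h i0
      simpa [hi0] using this
  set g : Fin b → ℕ := fun i => (K i ∩ K (j i)).card with hg
  have hstep : ∀ m, 1 ≤ m → ∀ hmb : m < b,
      (A m).card * B (g ⟨m, hmb⟩) ≤ (A (m + 1)).card := by
    intro m hm1 hmb
    set i : Fin b := ⟨m, hmb⟩ with hi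
    have hiv : (i : ℕ) = m := rfl
    have hine : (i : ℕ) ≠ 0 := by omega
    set φ : (Fin b → Finset W) → (Fin b → Finset W) := fun L => Function.update L i ∅ with hφ
    have hφmaps : ∀ L ∈ A (m + 1), φ L ∈ A m := by
      intro L hL
      rw [hmemA] at hL ⊢
      obtain ⟨h1, h2, f, hfinj, hfim⟩ := hL
      refine ⟨?_, ?_, f, hfinj.mono (Finset.coe_subset.mpr (hUmono (Nat.le_succ m))), ?_⟩
      · intro i' hi'
        have hne' : i' ≠ i := fun h => by rw [h, hiv] at hi'; omega
        rw [hφ]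
        simp only [Function.update_of_ne hne']
        exact h1 i' (by omega)
      · intro i' hi'
        by_cases h : i' = i
        · rw [hφ, h]; simp
        · rw [hφ]
          simp only [Function.update_of_ne h]
          apply h2
          have : (i' : ℕ) ≠ m := fun hc => h (Fin.ext (by rw [hiv]; omega))
          omega
      · intro i' hi'
        have hne' : i' ≠ i := fun h => by rw [h, hiv] at hi'; omega
        rw [hφ]
        simp only [Function.update_of_ne hne']
        exact hfim i' (by omega)
    have hkey : ∀ M ∈ A m, B (g i) ≤ ((A (m + 1)).filter (fun L => φ L = M)).card := by
      intro M hM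
      rw [hmemA] at hM
      obtain ⟨hM1, hM2, f, hfinj, hfim⟩ := hM
      set G : Finset V := K i ∩ K (j i) with hG
      set F : Finset W := G.image f with hF
      have hji : j i < i := hj i hine
      have hjm : ((j i) : ℕ) < m := hji
      have hKjU : K (j i) ⊆ U m := hKU (j i) m hjm
      have hGU : G ⊆ U m := le_trans inter_subset_right hKjU
      have hFcard : F.card = G.card :=
        Finset.card_image_of_injOn (hfinj.mono (Finset.coe_subset.mpr hGU))
      have hGne : G.Nonempty := hne i hine
      have hFne : F.Nonempty := hGne.image f
      have hMj := hM1 (j i) hjm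
      have hFM : F ⊆ M (j i) := by
        rw [← hfim (j i) hjm, hF]
        exact Finset.image_subset_image inter_subset_right
      have hF𝒢 : F ∈ 𝒢 := hclosed (M (j i)) hMj.1 (hFne.mono hFM) F hFM hFne
      set S : Finset W := (U m).image f \ F with hS
      have hFS : Disjoint F S := disjoint_sdiff_self_right
      have hScard : S.card ≤ r := by
        calc S.card ≤ ((U m).image f).card := card_le_card sdiff_subset
          _ ≤ (U m).card := card_image_le
          _ ≤ Fintype.card V := by simpa using Finset.card_le_univ (U m)
          _ = r := hr
      obtain ⟨hWTC, hWdeg, -⟩ := hstrong S hScard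
      have hFW : F ∈ complexRemove 𝒢 S := by
        rw [complexRemove, mem_image]
        refine ⟨F, mem_filter.mpr ⟨hF𝒢, ?_⟩, ?_⟩
        · intro hsub
          obtain ⟨w, hw⟩ := hFne
          exact (Finset.disjoint_left.mp hFS hw) (hsub hw)
        · exact Finset.sdiff_eq_self_of_disjoint hFS
      have hdeg : B (g i) ≤ complexDeg t (complexRemove 𝒢 S) F :=
        hWdeg (g i) (Finset.card_pos.mpr hGne) (hglue i hine) F hFW hFcard
      set 𝒩 := (complexRemove 𝒢 S).filter (fun N => N.card = t ∧ F ⊆ N) with h𝒩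
      have hNfacts : ∀ N ∈ 𝒩, N ∈ 𝒢 ∧ Disjoint N S ∧ N.card = t ∧ F ⊆ N := by
        intro N hN
        rw [h𝒩, mem_filter] at hN
        obtain ⟨hNW, hNt, hFN⟩ := hN
        rw [complexRemove, mem_image] at hNW
        obtain ⟨K', hK', rfl⟩ := hNW
        rw [mem_filter] at hK'
        have hNsub : K' \ S ⊆ K' := sdiff_subset
        have hK'ne : K'.Nonempty := Finset.Nonempty.mono hNsub (hFne.mono hFN)
        have hK'le : K'.card ≤ t := hcard_le K' hK'.1 hK'ne
        have heq : K' \ S = K' :=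
          Finset.eq_of_subset_of_card_le hNsub (by rw [hNt]; exact hK'le)
        exact ⟨by rw [heq]; exact hK'.1, sdiff_disjoint, hNt, hFN⟩
      have hψ : ∀ N ∈ 𝒩, Function.update M i N ∈ (A (m + 1)).filter (fun L => φ L = M) := by
        intro N hN
        obtain ⟨hN𝒢, hNS, hNt, hFN⟩ := hNfacts N hN
        rw [mem_filter]
        constructor
        · rw [hmemA]
          refine ⟨?_, ?_, ?_⟩
          · intro i' hi'
            by_cases h : i' = i
            · rw [h, Function.update_self]
              exact ⟨hN𝒢, hNt⟩
            · rw [Function.update_of_ne h]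
              refine hM1 i' ?_
              have : (i' : ℕ) ≠ m := fun hc => h (Fin.ext (by rw [hiv]; omega))
              omega
          · intro i' hi'
            have h : i' ≠ i := fun hc => by rw [hc, hiv] at hi'; omega
            rw [Function.update_of_ne h]
            exact hM2 i' (by omega)
          · set D : Finset V := K i \ G with hD
            have hGKi : G ⊆ K i := inter_subset_left
            have hDU : Disjoint D (U m) := by
              rw [Finset.disjoint_left]
              intro v hvD hvU
              rw [hD, mem_sdiff] at hvD
              simp only [hU, mem_biUnion, mem_filter, mem_univ, true_and] at hvU
              obtain ⟨i'', hi'', hvi''⟩ := hvU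
              have hlt : i'' < i := by rw [Fin.lt_def, hiv]; exact hi''
              exact hvD.2 (hint i hine i'' hlt (mem_inter.mpr ⟨hvD.1, hvi''⟩))
            have hcards : D.card = (N \ F).card := by
              rw [hD, card_sdiff_of_subset hGKi, card_sdiff_of_subset hFN, hKcard, hNt, hFcard]
            have hdisjN : ∀ w ∈ N \ F, w ∉ (U m).image f := by
              intro w hw hwim
              rw [mem_sdiff] at hw
              have hwS : w ∈ S := by rw [hS, mem_sdiff]; exact ⟨hwim, hw.2⟩
              exact (Finset.disjoint_left.mp hNS hw.1) hwS
            obtain ⟨g', hg1, hg2, hg3⟩ := extend_inj f (U m) D (N \ F) hfinj hDU hcards hdisjN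
            have hUsub : U (m + 1) ⊆ U m ∪ D := by
              intro v hv
              simp only [hU, mem_biUnion, mem_filter, mem_univ, true_and] at hv
              obtain ⟨i'', hi'', hvi''⟩ := hv
              by_cases hlt : (i'' : ℕ) < m
              · exact mem_union_left _ (hKU i'' m hlt hvi'')
              · have : i'' = i := Fin.ext (by rw [hiv]; omega)
                rw [this] at hvi''
                by_cases hvG : v ∈ G
                · exact mem_union_left _ (hGU hvG)
                · exact mem_union_right _ (by rw [hD, mem_sdiff]; exact ⟨hvi'', hvG⟩)
            refine ⟨g', hg1.mono (Finset.coe_subset.mpr hUsub), ?_⟩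
            intro i' hi'
            by_cases h : i' = i
            · rw [h, Function.update_self]
              have hKiGD : K i = G ∪ D := by
                rw [hD]
                exact (Finset.union_sdiff_of_subset hGKi).symm
              rw [hKiGD, Finset.image_union]
              have hGim : G.image g' = F := by
                rw [hF]
                exact Finset.image_congr (fun x hx => hg2 x (hGU hx))
              rw [hGim, hg3]
              exact Finset.union_sdiff_of_subset hFN
            · rw [Function.update_of_ne h]
              have hi'm : (i' : ℕ) < m := by
                have : (i' : ℕ) ≠ m := fun hc => h (Fin.ext (by rw [hiv]; omega))
                omega
              rw [← hfim i' hi'm]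
              exact Finset.image_congr (fun x hx => hg2 x (hKU i' m hi'm hx))
        · rw [hφ]
          have hMi : M i = ∅ := hM2 i (by rw [hiv])
          simp only [Function.update_idem]
          rw [← hMi, Function.update_eq_self]
      calc B (g i) ≤ 𝒩.card := hdeg
        _ ≤ ((A (m + 1)).filter (fun L => φ L = M)).card := by
            apply Finset.card_le_card_of_injOn (fun N => Function.update M i N) hψ
            intro N hN N' hN' hEq
            have := congrFun hEq i
            simpa using this
    calc (A m).card * B (g i)
        = ∑ _M ∈ A m, B (g i) := by rw [sum_const, smul_eq_mul]
      _ ≤ ∑ M ∈ A m, ((A (m + 1)).filter (fun L => φ L = M)).card :=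
            Finset.sum_le_sum hkey
      _ = (A (m + 1)).card := (Finset.card_eq_sum_card_fiberwise hφmaps).symm
  have hmain : ∀ m, 1 ≤ m → m ≤ b →
      (𝒢.filter (fun X => X.card = t)).card *
        ∏ i ∈ Finset.univ.filter (fun i : Fin b => 0 < (i : ℕ) ∧ (i : ℕ) < m), B (g i)
      ≤ (A m).card := by
    intro m
    induction m with
    | zero => intro h1 _; exact absurd h1 (by omega)
    | succ n ih =>
      intro h1 hnb
      by_cases hn : n = 0
      · subst hn
        have hempty : Finset.univ.filter (fun i : Fin b => 0 < (i : ℕ) ∧ (i : ℕ) < 1) = ∅ := by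
          ext i'
          simp only [mem_filter, mem_univ, true_and, notMem_empty, iff_false]
          omega
        rw [hempty, prod_empty, mul_one]
        exact hbase
      · have hn1 : 1 ≤ n := by omega
        have hnb' : n < b := by omega
        have hnv : ((⟨n, hnb'⟩ : Fin b) : ℕ) = n := rfl
        have hfil : Finset.univ.filter (fun i : Fin b => 0 < (i : ℕ) ∧ (i : ℕ) < n + 1)
            = insert (⟨n, hnb'⟩ : Fin b)
              (Finset.univ.filter (fun i : Fin b => 0 < (i : ℕ) ∧ (i : ℕ) < n)) := by
          ext i'
          simp only [mem_insert, mem_filter, mem_univ, true_and]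
          constructor
          · rintro ⟨h0, hlt⟩
            by_cases hc : (i' : ℕ) = n
            · exact Or.inl (Fin.ext (by rw [hnv]; exact hc))
            · exact Or.inr ⟨h0, by omega⟩
          · rintro (rfl | ⟨h0, hlt⟩)
            · rw [hnv]
              omega
            · exact ⟨h0, by omega⟩
        have hnotmem : (⟨n, hnb'⟩ : Fin b) ∉
            Finset.univ.filter (fun i : Fin b => 0 < (i : ℕ) ∧ (i : ℕ) < n) := by
          simp only [mem_filter, mem_univ, true_and, hnv]
          omega
        rw [hfil, prod_insert hnotmem]
        calc (𝒢.filter (fun X => X.card = t)).card *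
              (B (g ⟨n, hnb'⟩) *
                ∏ i ∈ Finset.univ.filter (fun i : Fin b => 0 < (i : ℕ) ∧ (i : ℕ) < n), B (g i))
            = ((𝒢.filter (fun X => X.card = t)).card *
                ∏ i ∈ Finset.univ.filter (fun i : Fin b => 0 < (i : ℕ) ∧ (i : ℕ) < n), B (g i)) *
              B (g ⟨n, hnb'⟩) := by ring
          _ ≤ (A n).card * B (g ⟨n, hnb'⟩) :=
              Nat.mul_le_mul_right _ (ih hn1 (le_of_lt hnb'))
          _ ≤ (A (n + 1)).card := hstep n hn1 hnb'
  have hfinal := hmain b hb le_rfl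
  have hfeq : Finset.univ.filter (fun i : Fin b => 0 < (i : ℕ) ∧ (i : ℕ) < b)
      = Finset.univ.filter (fun i : Fin b => (i : ℕ) ≠ 0) := by
    ext i'
    simp only [mem_filter, mem_univ, true_and]
    have := i'.isLt
    omega
  have hmaps : ∀ i ∈ Finset.univ.filter (fun i : Fin b => (i : ℕ) ≠ 0), g i ∈ Finset.Icc 1 s := by
    intro i hi
    rw [mem_filter] at hi
    rw [Finset.mem_Icc]
    exact ⟨Finset.card_pos.mpr (hne i hi.2), hglue i hi.2⟩
  have hprod : ∏ i ∈ Finset.univ.filter (fun i : Fin b => (i : ℕ) ≠ 0), B (g i)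
      = ∏ k ∈ Finset.Icc 1 s, B k ^ d k := by
    rw [← Finset.prod_fiberwise_of_maps_to hmaps (fun i => B (g i))]
    apply Finset.prod_congr rfl
    intro k _
    rw [Finset.filter_filter]
    rw [Finset.prod_congr rfl (fun i hi => by rw [(mem_filter.mp hi).2.2]), prod_const]
    rw [hd k]
  have hiff : ∀ L : Fin b → Finset W,
      P b L ↔ ((∀ i, L i ∈ 𝒢 ∧ (L i).card = t) ∧
        ∃ f : V → W, Function.Injective f ∧ ∀ i, (K i).image f = L i) := by
    intro L
    constructor
    · rintro ⟨h1, _h2, f, hfinj, hfim⟩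
      refine ⟨fun i => h1 i i.isLt, f, ?_, fun i => hfim i i.isLt⟩
      intro x y hxy
      have hx : x ∈ U b := by
        obtain ⟨i, hi⟩ := hcoverV x
        exact hKU i b i.isLt hi
      have hy : y ∈ U b := by
        obtain ⟨i, hi⟩ := hcoverV y
        exact hKU i b i.isLt hi
      exact hfinj hx hy hxy
    · rintro ⟨h1, f, hfinj, hfim⟩
      exact ⟨fun i _ => h1 i, fun i hi => absurd i.isLt (not_lt.mpr hi), f,
        Set.injOn_of_injective hfinj, fun i _ => hfim i⟩
  have hcardeq : Nat.card { L : Fin b → Finset W //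
      (∀ i, L i ∈ 𝒢 ∧ (L i).card = t) ∧
      ∃ f : V → W, Function.Injective f ∧ ∀ i, (K i).image f = L i } = (A b).card := by
    rw [Nat.card_congr (Equiv.subtypeEquivRight
      (fun L => ((hiff L).symm.trans (hmemA b L).symm)))]
    exact Nat.card_eq_finsetCard (A b)
  rw [hcardeq, ← hprod, ← hfeq]
  exact hfinal
end

section
/- Let (F,R) be a rooted graph, and let T ⊆ V(F) \ R be a set of non-root vertices such that N[u] = N[v] for all u, v ∈ T (where N[v] is the closed neighborhood). Then for any set S ⊆ V(F) \ R, either d(S \ T) ≤ d(S) or d(S ∪ T) ≤ d(S), where d(X) = e(X)/|X| and e(X) is the number of edges of F incident to X. -/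
open Finset

lemma key_count {V : Type*} [Fintype V] [DecidableEq V]
    (F : SimpleGraph V) [DecidableRel F.Adj] (C A U : Finset V)
    (hUC : U ⊆ C) (hUA : Disjoint U A)
    (hadj : ∀ t ∈ U, ∀ w, F.Adj t w ↔ w ∈ C ∧ w ≠ t) :
    2 * (F.edgeFinset.filter (fun ed => ∃ v ∈ A ∪ U, v ∈ ed)).card
      + ((C \ A) \ U).offDiag.card
    = 2 * (F.edgeFinset.filter (fun ed => ∃ v ∈ A, v ∈ ed)).card
      + (C \ A).offDiag.card := by
  classical
  set s : Finset V := C \ A with hs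
  set E1 : Finset (Sym2 V) :=
    F.edgeFinset.filter (fun ed => (∃ v ∈ U, v ∈ ed) ∧ ¬ ∃ v ∈ A, v ∈ ed) with hE1
  set Pairs : Finset (V × V) :=
    s.offDiag.filter (fun p => p.1 ∈ U ∨ p.2 ∈ U) with hP
  -- step 1: split the big filter
  have step1 : (F.edgeFinset.filter (fun ed => ∃ v ∈ A ∪ U, v ∈ ed)).card
      = (F.edgeFinset.filter (fun ed => ∃ v ∈ A, v ∈ ed)).card + E1.card := by
    rw [hE1, ← Finset.card_union_of_disjoint]
    · congr 1
      ext ed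
      simp only [Finset.mem_filter, Finset.mem_union]
      constructor
      · rintro ⟨hed, v, hv, hvm⟩
        rcases hv with h | h
        · exact Or.inl ⟨hed, v, h, hvm⟩
        · by_cases hA : ∃ w ∈ A, w ∈ ed
          · exact Or.inl ⟨hed, hA⟩
          · exact Or.inr ⟨hed, ⟨v, h, hvm⟩, hA⟩
      · rintro (⟨hed, v, hv, hvm⟩ | ⟨hed, ⟨v, hv, hvm⟩, _⟩)
        · exact ⟨hed, v, Or.inl hv, hvm⟩
        · exact ⟨hed, v, Or.inr hv, hvm⟩
    · rw [Finset.disjoint_left]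
      rintro ed h1 h2
      simp only [Finset.mem_filter] at h1 h2
      exact h2.2.2 h1.2
  -- step 3: pairs complement
  have step3 : Pairs.card + (s \ U).offDiag.card = s.offDiag.card := by
    rw [hP]
    have : (s \ U).offDiag = s.offDiag.filter (fun p => ¬ (p.1 ∈ U ∨ p.2 ∈ U)) := by
      ext p
      simp only [Finset.mem_offDiag, Finset.mem_filter, Finset.mem_sdiff]
      tauto
    rw [this]
    exact Finset.card_filter_add_card_filter_not _
  -- step 2: Pairs double covers E1
  have hmap : ∀ p ∈ Pairs, Sym2.mk p.1 p.2 ∈ E1 := by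
    rintro ⟨x, y⟩ hp
    simp only [hP, Finset.mem_filter, Finset.mem_offDiag] at hp
    obtain ⟨⟨hx, hy, hxy⟩, hor⟩ := hp
    have hxC : x ∈ s := hx
    have hyC : y ∈ s := hy
    have hadj' : F.Adj x y := by
      rcases hor with h | h
      · exact (hadj x h y).2 ⟨(Finset.mem_sdiff.1 hy).1, Ne.symm hxy⟩
      · exact ((hadj y h x).2 ⟨(Finset.mem_sdiff.1 hx).1, hxy⟩).symm
    simp only [hE1, Finset.mem_filter, SimpleGraph.mem_edgeFinset]
    refine ⟨(SimpleGraph.mem_edgeSet F).2 hadj', ?_, ?_⟩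
    · rcases hor with h | h
      · exact ⟨x, h, by simp [Sym2.mem_iff]⟩
      · exact ⟨y, h, by simp [Sym2.mem_iff]⟩
    · rintro ⟨v, hv, hvm⟩
      rcases Sym2.mem_iff.1 hvm with rfl | rfl
      · exact (Finset.mem_sdiff.1 hx).2 hv
      · exact (Finset.mem_sdiff.1 hy).2 hv
  have step2 : Pairs.card = 2 * E1.card := by
    rw [Finset.card_eq_sum_card_fiberwise hmap]
    rw [Finset.sum_congr rfl (fun ed hed => ?_), Finset.sum_const, smul_eq_mul, mul_comm]
    -- show each fiber has card 2
    induction ed using Sym2.ind with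
    | _ a b =>
      simp only [hE1, Finset.mem_filter, SimpleGraph.mem_edgeFinset,
        SimpleGraph.mem_edgeSet] at hed
      obtain ⟨hab, ⟨u, hu, hum⟩, hnA⟩ := hed
      have hne : a ≠ b := hab.ne
      -- endpoints in s, one in U
      have haU : a ∈ U ∨ b ∈ U := by
        rcases Sym2.mem_iff.1 hum with rfl | rfl
        · exact Or.inl hu
        · exact Or.inr hu
      have haA : a ∉ A := fun h => hnA ⟨a, h, by simp [Sym2.mem_iff]⟩
      have hbA : b ∉ A := fun h => hnA ⟨b, h, by simp [Sym2.mem_iff]⟩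
      have haC : a ∈ C ∧ b ∈ C := by
        rcases haU with h | h
        · exact ⟨hUC h, ((hadj a h b).1 hab).1⟩
        · exact ⟨((hadj b h a).1 hab.symm).1, hUC h⟩
      have has : a ∈ s := Finset.mem_sdiff.2 ⟨haC.1, haA⟩
      have hbs : b ∈ s := Finset.mem_sdiff.2 ⟨haC.2, hbA⟩
      have : Pairs.filter (fun p => Sym2.mk p.1 p.2 = s(a, b)) = {(a, b), (b, a)} := by
        ext ⟨x, y⟩
        simp only [Finset.mem_filter, Finset.mem_insert, Finset.mem_singleton,
          Prod.mk.injEq, hP, Finset.mem_offDiag, Sym2.eq_iff]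
        constructor
        · rintro ⟨-, (⟨rfl, rfl⟩ | ⟨rfl, rfl⟩)⟩
          · exact Or.inl ⟨rfl, rfl⟩
          · exact Or.inr ⟨rfl, rfl⟩
        · rintro (⟨rfl, rfl⟩ | ⟨rfl, rfl⟩)
          · exact ⟨⟨⟨has, hbs, hne⟩, haU⟩, Or.inl ⟨rfl, rfl⟩⟩
          · exact ⟨⟨⟨hbs, has, hne.symm⟩, haU.symm⟩, Or.inr ⟨rfl, rfl⟩⟩
      rw [this]
      rw [Finset.card_insert_of_notMem (by simp [hne]), Finset.card_singleton]
  omega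



/-- All-or-nothing lemma: if `T` is a set of non-root vertices of a rooted graph `(F,R)`
with pairwise equal closed neighborhoods, then for any set `S` of non-root vertices,
either `d(S \ T) ≤ d(S)` or `d(S ∪ T) ≤ d(S)`, where `d(X) = e(X)/|X|` and `e(X)` counts
edges incident to `X`. -/
theorem all_or_nothing {V : Type*} [Fintype V] [DecidableEq V]
    (F : SimpleGraph V) [DecidableRel F.Adj] (R T S : Finset V)
    (hT : T ⊆ Finset.univ \ R) (hS : S ⊆ Finset.univ \ R) (hSne : S.Nonempty)
    (hN : ∀ u ∈ T, ∀ v ∈ T,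
      insert u (F.neighborFinset u) = insert v (F.neighborFinset v))
    (e : Finset V → ℕ)
    (he : ∀ X, e X = (F.edgeFinset.filter (fun ed => ∃ v ∈ X, v ∈ ed)).card)
    (d : Finset V → ℝ) (hd : ∀ X, d X = (e X : ℝ) / X.card) :
    d (S \ T) ≤ d S ∨ d (S ∪ T) ≤ d S := by
  classical
  by_cases hST : S ∩ T = ∅
  · left
    rw [show S \ T = S from Finset.sdiff_eq_self_iff_disjoint.2
      (Finset.disjoint_iff_inter_eq_empty.2 hST)]
  by_cases hTS : T ⊆ S
  · right
    rw [Finset.union_eq_left.2 hTS]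
  by_cases hA0 : S \ T = ∅
  · left
    have he0 : e (S \ T) = 0 := by
      rw [he, hA0]; simp
    rw [hd, hd, he0]
    simp only [Nat.cast_zero, zero_div]
    positivity
  -- main case
  have hAne : (S \ T).Nonempty := Finset.nonempty_iff_ne_empty.2 hA0
  have hKne : (S ∩ T).Nonempty := Finset.nonempty_iff_ne_empty.2 hST
  obtain ⟨t0, ht0⟩ := hKne.mono (Finset.inter_subset_right)
  set C : Finset V := insert t0 (F.neighborFinset t0) with hC
  have hTC : T ⊆ C := by
    intro t ht
    rw [hC, hN t0 ht0 t ht]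
    exact Finset.mem_insert_self t _
  have hadj : ∀ t ∈ T, ∀ w, F.Adj t w ↔ w ∈ C ∧ w ≠ t := by
    intro t ht w
    rw [hC, ← hN t ht t0 ht0]
    constructor
    · intro h
      exact ⟨Finset.mem_insert_of_mem ((F.mem_neighborFinset t w).2 h), h.ne'⟩
    · rintro ⟨hw, hne⟩
      rcases Finset.mem_insert.1 hw with rfl | hw
      · exact absurd rfl hne
      · exact (F.mem_neighborFinset t w).1 hw
  set A : Finset V := S \ T with hAdef
  have hdisj1 : Disjoint (S ∩ T) A := (Finset.disjoint_sdiff_inter S T).symm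
  have hdisj2 : Disjoint T A := (Finset.sdiff_disjoint).symm
  have hU1 : A ∪ (S ∩ T) = S := by
    rw [hAdef, Finset.sdiff_union_inter]
  have hU2 : A ∪ T = S ∪ T := by
    rw [hAdef, Finset.sdiff_union_self_eq_union]
  have key1 := key_count F C A (S ∩ T) ((Finset.inter_subset_right).trans hTC) hdisj1
    (fun t ht => hadj t (Finset.mem_of_mem_inter_right ht))
  have key2 := key_count F C A T hTC hdisj2 hadj
  rw [hU1, ← he, ← he] at key1
  rw [hU2, ← he, ← he] at key2
  -- cardinalities
  have hsub1 : S ∩ T ⊆ C \ A :=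
    Finset.subset_sdiff.2 ⟨(Finset.inter_subset_right).trans hTC, hdisj1⟩
  have hsub2 : T ⊆ C \ A := Finset.subset_sdiff.2 ⟨hTC, hdisj2⟩
  set a : ℕ := A.card with ha
  set k : ℕ := (S ∩ T).card with hk
  set m : ℕ := T.card with hm
  set c : ℕ := (C \ A).card with hc
  have hkm : k < m := Finset.card_lt_card (Finset.ssubset_iff_subset_ne.2
    ⟨Finset.inter_subset_right, fun h => hTS (by rw [← h]; exact Finset.inter_subset_left)⟩)
  have hmc : m ≤ c := Finset.card_le_card hsub2
  have hkc : k ≤ c := Finset.card_le_card hsub1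
  have ha1 : 1 ≤ a := Finset.card_pos.2 hAne
  have hcard1 : ((C \ A) \ (S ∩ T)).card = c - k := by
    rw [Finset.card_sdiff_of_subset hsub1]
  have hcard2 : ((C \ A) \ T).card = c - m := by
    rw [Finset.card_sdiff_of_subset hsub2]
  have hcardS : S.card = a + k := by
    rw [← hU1, Finset.card_union_of_disjoint (Finset.disjoint_sdiff_inter S T)]
  have hcardST : (S ∪ T).card = a + m := by
    rw [← hU2, Finset.card_union_of_disjoint hdisj2.symm]
  -- pass to reals
  have offd : ∀ x : Finset V, ((x.offDiag.card : ℝ)) = (x.card : ℝ)^2 - x.card := by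
    intro x
    rw [Finset.offDiag_card]
    have hle : x.card ≤ x.card * x.card := by
      rcases Nat.eq_zero_or_pos x.card with h | h
      · simp [h]
      · exact Nat.le_mul_of_pos_left _ h
    push_cast [Nat.cast_sub hle]
    ring
  -- real versions
  have hk1 : 1 ≤ k := Finset.card_pos.2 hKne
  have o1 : ((((C \ A) \ (S ∩ T)).offDiag.card : ℕ) : ℝ) = ((c:ℝ)-k)^2 - ((c:ℝ)-k) := by
    rw [offd, hcard1, Nat.cast_sub hkc]
  have o2 : ((((C \ A) \ T).offDiag.card : ℕ) : ℝ) = ((c:ℝ)-m)^2 - ((c:ℝ)-m) := by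
    rw [offd, hcard2, Nat.cast_sub hmc]
  have o3 : (((C \ A).offDiag.card : ℕ) : ℝ) = (c:ℝ)^2 - (c:ℝ) := by rw [offd]
  have k1R : 2*(e S:ℝ) + (((c:ℝ)-k)^2 - ((c:ℝ)-k)) = 2*(e A:ℝ) + ((c:ℝ)^2 - (c:ℝ)) := by
    have h := congrArg (fun n : ℕ => (n:ℝ)) key1
    push_cast at h
    rw [o1, o3] at h
    linarith
  have k2R : 2*(e (S ∪ T):ℝ) + (((c:ℝ)-m)^2 - ((c:ℝ)-m)) = 2*(e A:ℝ) + ((c:ℝ)^2 - (c:ℝ)) := by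
    have h := congrArg (fun n : ℕ => (n:ℝ)) key2
    push_cast at h
    rw [o2, o3] at h
    linarith
  simp only [hd, hcardS, hcardST]
  push_cast
  by_cases hcase : (e A : ℝ) / (a:ℝ) ≤ (e S : ℝ) / ((a:ℝ)+(k:ℝ))
  · exact Or.inl hcase
  · right
    push_neg at hcase
    have haR : (0:ℝ) < a := by exact_mod_cast ha1
    have hakR : (0:ℝ) < (a:ℝ) + k := by positivity
    have hamR : (0:ℝ) < (a:ℝ) + m := by positivity
    have hkR : (0:ℝ) < k := by exact_mod_cast hk1
    have hkmR : (k:ℝ) < m := by exact_mod_cast hkm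
    rw [div_lt_div_iff₀ hakR haR] at hcase
    rw [div_le_div_iff₀ hamR hakR]
    have hid : (m:ℝ)*(e S:ℝ) - ((m:ℝ)-k)*(e A:ℝ) - (k:ℝ)*(e (S ∪ T):ℝ)
        = (k:ℝ)*(m:ℝ)*((m:ℝ)-(k:ℝ))/2 := by
      linear_combination (m:ℝ)/2 * k1R - (k:ℝ)/2 * k2R
    have hconc : ((m:ℝ)-k)*(e A:ℝ) + (k:ℝ)*(e (S ∪ T):ℝ) ≤ (m:ℝ)*(e S:ℝ) := by
      nlinarith [mul_nonneg (mul_nonneg hkR.le (le_trans hkR.le hkmR.le)) (sub_nonneg.2 hkmR.le)]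
    by_contra hcon
    push_neg at hcon
    have p1 := mul_lt_mul_of_pos_left hcase (show (0:ℝ) < (m:ℝ)-k by linarith)
    have p2 := mul_lt_mul_of_pos_left hcon (show (0:ℝ) < (k:ℝ) from hkR)
    have p3 := mul_le_mul_of_nonneg_right hconc hakR.le
    linarith [p1, p2, p3]
end

section
/- Let t ≥ 3 and let s < t/2 be positive integers. For every rational x/y (x, y positive integers) with (t+s−1)/2 < x/y ≤ (t+2s−1)/2, setting a = y(C(t,2) − 2C(s,2)) − x(t−2s) and b = s·x − y·C(s,2), one has a and b positive integers with a < b and (a·C(s,2) + b·(C(t,2) − 2C(s,2))) / (a·s + b·(t−2s)) = x/y. -/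
/-!
Both numerator and denominator of the density are multiples of `D = s·C(t,2) − t·C(s,2)
= s·t·(t − s)/2 > 0`: the numerator is `x·D` and the denominator is `y·D`. Positivity of `a` and
`a < b` are the two bounds on `x/y`, since `2a ≥ 2s²·y` by the upper bound and
`b − a = (t − s)·(x − y·(t + s − 1)/2)`.
-/

theorem type1_density_eq_div {K : Type*} [Field K] {cs ct s t x y : K}
    (hD : s * ct - t * cs ≠ 0) :
    ((y * ct - 2 * y * cs - x * (t - 2 * s)) * cs + (s * x - y * cs) * (ct - 2 * cs)) /
        ((y * ct - 2 * y * cs - x * (t - 2 * s)) * s + (s * x - y * cs) * (t - 2 * s)) =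
      x / y := by
  rw [show (y * ct - 2 * y * cs - x * (t - 2 * s)) * cs + (s * x - y * cs) * (ct - 2 * cs) =
      x * (s * ct - t * cs) by ring,
    show (y * ct - 2 * y * cs - x * (t - 2 * s)) * s + (s * x - y * cs) * (t - 2 * s) =
      y * (s * ct - t * cs) by ring,
    mul_div_mul_right _ _ hD]

theorem mul_choose_two_lt_mul_choose_two {s t : ℕ} (hs : 0 < s) (hst : s < t) :
    t * s.choose 2 < s * t.choose 2 := by
  suffices (t : ℚ) * (s * (s - 1) / 2) < s * (t * (t - 1) / 2) by
    rw [← Nat.cast_choose_two, ← Nat.cast_choose_two] at this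
    exact_mod_cast this
  have hs' : (0 : ℚ) < s := by exact_mod_cast hs
  have hst' : (s : ℚ) < t := by exact_mod_cast hst
  nlinarith [mul_pos hs' (hs'.trans hst')]

section OrderedField

variable {K : Type*} [Field K] [LinearOrder K] [IsStrictOrderedRing K] {s t x y : K}

theorem type1_a_pos (hs : 0 < s) (hst : 2 * s ≤ t) (hy : 0 < y)
    (h : x / y ≤ (t + 2 * s - 1) / 2) :
    0 < y * (t * (t - 1) / 2) - 2 * y * (s * (s - 1) / 2) - x * (t - 2 * s) := by
  have hx : 2 * x ≤ (t + 2 * s - 1) * y := by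
    rw [div_le_div_iff₀ hy two_pos] at h
    linarith
  nlinarith [mul_le_mul_of_nonneg_right hx (sub_nonneg.mpr hst), mul_pos (mul_pos hs hs) hy]

theorem type1_a_lt_b (hst : s < t) (hy : 0 < y) (h : (t + s - 1) / 2 < x / y) :
    y * (t * (t - 1) / 2) - 2 * y * (s * (s - 1) / 2) - x * (t - 2 * s) <
      s * x - y * (s * (s - 1) / 2) := by
  have hx : (t + s - 1) * y < 2 * x := by
    rw [div_lt_div_iff₀ two_pos hy] at h
    linarith
  nlinarith [mul_lt_mul_of_pos_left hx (sub_pos.mpr hst)]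

end OrderedField

theorem type1_density_range_general (t s x y : ℕ) (hs : 1 ≤ s) (hst : 2 * s < t)
    (hy : 0 < y)
    (h1 : ((t : ℚ) + s - 1) / 2 < (x : ℚ) / y)
    (h2 : (x : ℚ) / y ≤ ((t : ℚ) + 2 * s - 1) / 2)
    (a b : ℤ)
    (ha : a = (y : ℤ) * (t.choose 2 : ℤ) - 2 * (y : ℤ) * (s.choose 2 : ℤ)
      - (x : ℤ) * ((t : ℤ) - 2 * s))
    (hb : b = (s : ℤ) * x - (y : ℤ) * (s.choose 2 : ℤ)) :
    0 < a ∧ a < b ∧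
      ((a : ℚ) * (s.choose 2 : ℚ) + (b : ℚ) * ((t.choose 2 : ℚ) - 2 * (s.choose 2 : ℚ))) /
        ((a : ℚ) * s + (b : ℚ) * ((t : ℚ) - 2 * s)) = (x : ℚ) / y := by
  have haQ : (a : ℚ) = y * (t.choose 2 : ℚ) - 2 * y * (s.choose 2 : ℚ) - x * (t - 2 * s) := by
    rw [ha]; push_cast; ring
  have hbQ : (b : ℚ) = s * x - y * (s.choose 2 : ℚ) := by
    rw [hb]; push_cast; ring
  have hsQ : (0 : ℚ) < s := by exact_mod_cast hs
  have hstQ : 2 * (s : ℚ) < t := by exact_mod_cast hst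
  have hyQ : (0 : ℚ) < y := by exact_mod_cast hy
  have hD : (s : ℚ) * t.choose 2 - t * s.choose 2 ≠ 0 :=
    sub_ne_zero.mpr (by exact_mod_cast (mul_choose_two_lt_mul_choose_two hs (by omega)).ne')
  refine ⟨?_, ?_, ?_⟩
  · have := type1_a_pos hsQ hstQ.le hyQ h2
    rw [← Nat.cast_choose_two, ← Nat.cast_choose_two, ← haQ] at this
    exact_mod_cast this
  · have := type1_a_lt_b (by linarith) hyQ h1
    rw [← Nat.cast_choose_two, ← Nat.cast_choose_two, ← haQ, ← hbQ] at this
    exact_mod_cast this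
  · rw [haQ, hbQ]
    exact type1_density_eq_div hD

/-- Every rational `x/y` in the interval `((t+s-1)/2, (t+2s-1)/2]` is achieved as the
rooted density `d_t^1(a,b,s)` with `a = y(C(t,2) - 2C(s,2)) - x(t-2s)` and
`b = sx - yC(s,2)`, which are positive integers with `a < b`. -/
theorem type1_density_range (t s x y : ℕ) (ht : 3 ≤ t) (hs : 1 ≤ s) (hst : 2 * s < t)
    (hx : 0 < x) (hy : 0 < y)
    (h1 : ((t : ℚ) + s - 1) / 2 < (x : ℚ) / y)
    (h2 : (x : ℚ) / y ≤ ((t : ℚ) + 2 * s - 1) / 2)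
    (a b : ℤ)
    (ha : a = (y : ℤ) * (t.choose 2 : ℤ) - 2 * (y : ℤ) * (s.choose 2 : ℤ)
      - (x : ℤ) * ((t : ℤ) - 2 * s))
    (hb : b = (s : ℤ) * x - (y : ℤ) * (s.choose 2 : ℤ)) :
    0 < a ∧ a < b ∧
      ((a : ℚ) * (s.choose 2 : ℚ) + (b : ℚ) * ((t.choose 2 : ℚ) - 2 * (s.choose 2 : ℚ))) /
        ((a : ℚ) * s + (b : ℚ) * ((t : ℚ) - 2 * s)) = (x : ℚ) / y :=
  type1_density_range_general t s x y hs hst hy h1 h2 a b ha hb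
end

section
/- Let t be an even positive integer and s = t/2. For every rational x/y (x,y positive integers) with x/y > (3t−2)/4, setting a = y·s² and b = s·x − y·C(s,2), one has a, b positive integers with a < b and (a·C(s,2) + b·(C(t,2) − 2C(s,2))) / (a·s + b·(t−2s)) = x/y. -/
/-! With `t = 2s` the `b`-terms of the denominator vanish and `C(2s,2) - 2C(s,2) = s²`, so the
density is `(a·C(s,2) + b·s²)/(a·s)`. The choice `b = sx - y·C(s,2)` makes the numerator `s³x`
against the denominator `a·s = ys³`. Finally `b - a = s(x - y(3s-1)/2)`, which is positive exactly
when `x/y > (3s-1)/2 = (3t-2)/4`. -/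

theorem Nat.choose_two_two_mul (s : ℕ) : (2 * s).choose 2 = 2 * s.choose 2 + s ^ 2 := by
  have h : ((2 * s).choose 2 : ℚ) = 2 * s.choose 2 + s ^ 2 := by
    rw [Nat.cast_choose_two, Nat.cast_choose_two]
    push_cast
    ring
  exact_mod_cast h

theorem mul_sq_lt_mul_sub_mul_choose_two {s : ℕ} {x y : ℚ} (hs : 0 < s)
    (h : (3 * s - 1) / 2 * y < x) : y * s ^ 2 < s * x - y * s.choose 2 := by
  have hgap : s * x - y * s.choose 2 - y * s ^ 2 = s * (x - (3 * s - 1) / 2 * y) := by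
    rw [Nat.cast_choose_two]
    ring
  have hsQ : (0 : ℚ) < s := by exact_mod_cast hs
  nlinarith

theorem weighted_density_eq_div {s c x y : ℚ} (hs : s ≠ 0) (hy : y ≠ 0) :
    (y * s ^ 2 * c + (s * x - y * c) * s ^ 2) / (y * s ^ 2 * s) = x / y := by
  field_simp
  ring

theorem type1_density_range_even_general (t s x y : ℕ) (ht : 0 < t) (hts : t = 2 * s)
    (hy : 0 < y)
    (h1 : (3 * (t : ℚ) - 2) / 4 < (x : ℚ) / y)
    (a b : ℤ)
    (ha : a = (y : ℤ) * (s : ℤ) ^ 2)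
    (hb : b = (s : ℤ) * x - (y : ℤ) * (s.choose 2 : ℤ)) :
    0 < a ∧ a < b ∧
      ((a : ℚ) * (s.choose 2 : ℚ) + (b : ℚ) * ((t.choose 2 : ℚ) - 2 * (s.choose 2 : ℚ))) /
        ((a : ℚ) * s + (b : ℚ) * ((t : ℚ) - 2 * s)) = (x : ℚ) / y := by
  subst hts ha hb
  have hs : 0 < s := by omega
  have hyQ : (0 : ℚ) < y := by exact_mod_cast hy
  have hx : (3 * s - 1) / 2 * (y : ℚ) < x := by
    rw [← lt_div_iff₀ hyQ]
    calc (3 * (s : ℚ) - 1) / 2 = (3 * ((2 * s : ℕ) : ℚ) - 2) / 4 := by push_cast; ring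
      _ < x / y := h1
  refine ⟨by positivity, ?_, ?_⟩
  · exact_mod_cast mul_sq_lt_mul_sub_mul_choose_two hs hx
  · rw [Nat.choose_two_two_mul]
    push_cast
    convert weighted_density_eq_div (s := (s : ℚ)) (c := (s.choose 2 : ℚ)) (by positivity)
      hyQ.ne' using 2 <;> ring

/-- For even `t` and `s = t/2`, every rational `x/y > (3t-2)/4` is achieved as the
rooted density `d_t^1(a,b,s)` with `a = y·s²` and `b = sx - yC(s,2)`, which are
positive integers with `a < b`. -/
theorem type1_density_range_even (t s x y : ℕ) (ht : 0 < t) (hts : t = 2 * s)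
    (hx : 0 < x) (hy : 0 < y)
    (h1 : (3 * (t : ℚ) - 2) / 4 < (x : ℚ) / y)
    (a b : ℤ)
    (ha : a = (y : ℤ) * (s : ℤ) ^ 2)
    (hb : b = (s : ℤ) * x - (y : ℤ) * (s.choose 2 : ℤ)) :
    0 < a ∧ a < b ∧
      ((a : ℚ) * (s.choose 2 : ℚ) + (b : ℚ) * ((t.choose 2 : ℚ) - 2 * (s.choose 2 : ℚ))) /
        ((a : ℚ) * s + (b : ℚ) * ((t : ℚ) - 2 * s)) = (x : ℚ) / y :=
  type1_density_range_even_general t s x y ht hts hy h1 a b ha hb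
end

section
/- Let t ≥ 3 be an odd integer and let d be a rational with d > t − 1. Then there exist positive integers a, b with a even and b ≥ 2a + 2 such that (3t−9)/4 + (t−3)/(2a) + b/a = d. -/
/-!
Multiplying by `a`, the equation reads `b + (t - 3)/2 = a (d - (3t - 9)/4)`. Since `t ≥ 3`, the rational
`y := d - (3t - 9)/4 - 2` exceeds `(t - 3)/4 ≥ 0`, so some even `a` makes `m := y a` a natural number
at least `(t + 1)/2`; then `b := 2a + m - (t - 3)/2` is a natural number `≥ 2a + 2` solving the equation.
-/

theorem Rat.exists_even_mul_eq_natCast_ge {y : ℚ} (hy : 0 < y) (N : ℕ) :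
    ∃ a m : ℕ, 0 < a ∧ Even a ∧ N ≤ m ∧ y * a = m := by
  have hnum : 0 < y.num := Rat.num_pos.mpr hy
  refine ⟨2 * y.den * (N + 1), 2 * y.num.toNat * (N + 1), by positivity, ?_, ?_, ?_⟩
  · exact even_two_mul _ |>.mul_right _
  · nlinarith [Int.toNat_of_nonneg hnum.le]
  · have hnum_cast : ((y.num.toNat : ℕ) : ℚ) = y.num := by exact_mod_cast Int.toNat_of_nonneg hnum.le
    push_cast
    rw [hnum_cast, ← Rat.mul_den_eq_num]
    ring

/-- For odd `t ≥ 3`, every rational `d > t - 1` is realized by the Type 2 density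
formula `d_t^2(a,b) = (3t-9)/4 + (t-3)/(2a) + b/a` for some positive integers `a, b`
with `a` even and `b ≥ 2a + 2`. -/
theorem type2_density_range (t : ℕ) (ht : 3 ≤ t) (hodd : Odd t)
    (d : ℚ) (hd : (t : ℚ) - 1 < d) :
    ∃ a b : ℕ, 0 < a ∧ Even a ∧ 2 * a + 2 ≤ b ∧
      (3 * (t : ℚ) - 9) / 4 + ((t : ℚ) - 3) / (2 * (a : ℚ)) + (b : ℚ) / (a : ℚ) = d := by
  obtain ⟨j, rfl⟩ := hodd
  have hy : 0 < d - (3 * ((2 * j + 1 : ℕ) : ℚ) - 9) / 4 - 2 := by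
    have : (3 : ℚ) ≤ ((2 * j + 1 : ℕ) : ℚ) := by exact_mod_cast ht
    linarith
  obtain ⟨a, m, ha, ha_even, hm, hya⟩ := Rat.exists_even_mul_eq_natCast_ge hy (j + 1)
  refine ⟨a, 2 * a + 2 + (m - (j + 1)), ha, ha_even, by omega, ?_⟩
  have ha_ne : (a : ℚ) ≠ 0 := by positivity
  rw [Nat.cast_add _ (m - (j + 1)), Nat.cast_sub hm]
  field_simp
  push_cast at hya ⊢
  linarith
end

section
/- Let t ≥ 3, a ≥ 1, and a+1 ≤ b ≤ 2a. The rooted graph T_3(a,b) obtained from the Bukh–Conlon tree T_2(a,b) by adding, for each of the b edges, a new unrooted vertex adjacent to both endpoints of that edge, is a balanced rooted graph with rooted density 3b/(a+b). -/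
/-!
Every edge `e` of `G2` forms, with its spike vertex, a triangle of `F`, and these `b` triangles
partition the edges of `F`; hence `F` has `3b` edges on `a + b` unrooted vertices. Let `S` be a
set of unrooted vertices with `s` spikes, whose tree vertices meet `m` edges of `G2`. The triangle
of `e` contains at least `[e ∈ S] + [e meets S] + [either]` edges meeting `S`, so `S` meets at
least `s + m + max s m` edges of `F`. Balance of `T_2` gives `b |S ∩ W| ≤ a m`, and for
`a ≤ b ≤ 2a` these two bounds combine to density at least `3b/(a+b)`.
-/

open Finset Sum

theorem three_mul_mul_add_le {a b w s m x : ℝ} (ha : 0 ≤ a) (hab : a ≤ b) (hba : b ≤ 2 * a)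
    (hw : b * w ≤ a * m) (hx : s + m + max s m ≤ x) : 3 * b * (w + s) ≤ x * (a + b) := by
  -- `(s + 2m)(a + b) - 3(am + bs) = (2b - a)(m - s)`, and symmetrically for `s ≥ m`
  rcases le_total s m with h | h
  · rw [max_eq_right h] at hx
    nlinarith [mul_nonneg (by linarith : 0 ≤ 2 * b - a) (sub_nonneg.2 h)]
  · rw [max_eq_left h] at hx
    nlinarith [mul_nonneg (by linarith : 0 ≤ 2 * a - b) (sub_nonneg.2 h)]

theorem mul_card_le_of_div_le_div {α : Type*} {a b x : ℝ} (ha : 0 < a) (hx : 0 ≤ x)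
    {s : Finset α} (h : s.Nonempty → b / a ≤ x / s.card) : b * s.card ≤ a * x := by
  rcases s.eq_empty_or_nonempty with rfl | hs
  · simpa using mul_nonneg ha.le hx
  · have := h hs
    rwa [div_le_div_iff₀ ha (by exact_mod_cast hs.card_pos), mul_comm x] at this

namespace Finset

variable {α β : Type*} [Fintype α] [Fintype β] [DecidableEq α] [DecidableEq β]

theorem toLeft_univ_sdiff_map_inl (s : Finset α) :
    (univ \ s.map ⟨inl, inl_injective⟩ : Finset (α ⊕ β)).toLeft = univ \ s := by
  ext; simp

theorem toRight_univ_sdiff_map_inl (s : Finset α) :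
    (univ \ s.map ⟨inl, inl_injective⟩ : Finset (α ⊕ β)).toRight = univ := by
  ext; simp

end Finset

namespace SimpleGraph

variable {V : Type*}

def incidentEdges [Fintype V] [DecidableEq V] (G : SimpleGraph V) [DecidableRel G.Adj]
    (S : Finset V) : Finset (Sym2 V) :=
  G.edgeFinset.filter fun ed => ∃ v ∈ S, v ∈ ed

structure IsSpikeGraph (G : SimpleGraph V) (F : SimpleGraph (V ⊕ G.edgeSet)) : Prop where
  adj_inl_inl : ∀ u v, F.Adj (inl u) (inl v) ↔ G.Adj u v
  adj_inl_inr : ∀ w e, F.Adj (inl w) (inr e) ↔ w ∈ (e : Sym2 V)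
  not_adj_inr_inr : ∀ e e', ¬ F.Adj (inr e) (inr e')

section

variable [Fintype V] {G : SimpleGraph V} [DecidableRel G.Adj]

def spikeTriangle [DecidableEq V] (F : SimpleGraph (V ⊕ G.edgeSet)) [DecidableRel F.Adj]
    (e : G.edgeSet) : Finset (Sym2 (V ⊕ G.edgeSet)) :=
  F.edgeFinset.filter fun ed => ed = (e : Sym2 V).map inl ∨ inr e ∈ ed

theorem card_filter_univ_edgeSet (p : Sym2 V → Prop) [DecidablePred p] :
    #{e : G.edgeSet | p e} = #{ed ∈ G.edgeFinset | p ed} := by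
  rw [← card_map (Function.Embedding.subtype _)]
  congr 1
  ext ed
  simp [and_comm]

end

namespace IsSpikeGraph

variable {G : SimpleGraph V} {F : SimpleGraph (V ⊕ G.edgeSet)}

theorem adj_inr_iff (hF : G.IsSpikeGraph F) {e : G.edgeSet} {x : V ⊕ G.edgeSet} :
    F.Adj (inr e) x ↔ ∃ w ∈ (e : Sym2 V), x = inl w := by
  cases x with
  | inl w => simp [F.adj_comm, hF.adj_inl_inr]
  | inr e' => simp [hF.not_adj_inr_inr]

variable [Fintype V] [DecidableEq V] [DecidableRel G.Adj] [DecidableRel F.Adj]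

theorem spikeTriangle_mk (hF : G.IsSpikeGraph F) {u v : V} (h : G.Adj u v) :
    spikeTriangle F ⟨s(u, v), h⟩ =
      {s(inl u, inl v), s(inl u, inr ⟨s(u, v), h⟩), s(inl v, inr ⟨s(u, v), h⟩)} := by
  ext ed
  simp only [spikeTriangle, mem_filter, mem_edgeFinset, mem_insert, mem_singleton]
  constructor
  · rintro ⟨hed, rfl | hmem⟩
    · left; rfl
    · obtain ⟨y, rfl⟩ := Sym2.mem_iff_exists.1 hmem
      obtain ⟨w, hw, rfl⟩ := hF.adj_inr_iff.1 hed
      rcases Sym2.mem_iff.1 hw with rfl | rfl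
      · exact Or.inr (Or.inl Sym2.eq_swap)
      · exact Or.inr (Or.inr Sym2.eq_swap)
  · rintro (rfl | rfl | rfl)
    · exact ⟨(hF.adj_inl_inl u v).2 h, Or.inl rfl⟩
    · exact ⟨(hF.adj_inl_inr _ _).2 (Sym2.mem_mk_left u v), Or.inr (Sym2.mem_mk_right _ _)⟩
    · exact ⟨(hF.adj_inl_inr _ _).2 (Sym2.mem_mk_right u v), Or.inr (Sym2.mem_mk_right _ _)⟩

theorem card_spikeTriangle (hF : G.IsSpikeGraph F) (e : G.edgeSet) :
    #(spikeTriangle F e) = 3 := by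
  obtain ⟨⟨u, v⟩, h⟩ := e
  have huv := h.ne
  rw [hF.spikeTriangle_mk h, card_insert_of_notMem (by simp), card_pair (by simpa)]

theorem pairwiseDisjoint_spikeTriangle (hF : G.IsSpikeGraph F) :
    (Set.univ : Set G.edgeSet).PairwiseDisjoint (spikeTriangle F) := by
  intro e _ e' _ hne
  change Disjoint (spikeTriangle F e) (spikeTriangle F e')
  refine Finset.disjoint_left.2 fun ed he he' => ?_
  simp only [spikeTriangle, mem_filter, mem_edgeFinset] at he he'
  obtain ⟨hed, rfl | hmem⟩ := he <;> obtain ⟨-, heq | hmem'⟩ := he'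
  · exact hne (Subtype.ext (Sym2.map.injective inl_injective heq))
  · simp at hmem'
  · simp [heq] at hmem
  · rw [(Sym2.mem_and_mem_iff (by simpa using hne)).1 ⟨hmem, hmem'⟩] at hed
    exact hF.not_adj_inr_inr e e' hed

theorem biUnion_spikeTriangle (hF : G.IsSpikeGraph F) :
    univ.biUnion (spikeTriangle F) = F.edgeFinset := by
  refine (biUnion_subset.2 fun e _ => filter_subset _ _).antisymm fun ed hed => ?_
  simp only [mem_biUnion, mem_univ, true_and, mem_filter, hed]
  induction ed with
  | _ x y =>
  rcases x with u | e
  · rcases y with v | e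
    · have h : G.Adj u v := (hF.adj_inl_inl u v).1 (mem_edgeFinset.1 hed)
      exact ⟨⟨s(u, v), h⟩, Or.inl rfl⟩
    · exact ⟨e, Or.inr (Sym2.mem_mk_right _ _)⟩
  · exact ⟨e, Or.inr (Sym2.mem_mk_left _ _)⟩

theorem card_edgeFinset (hF : G.IsSpikeGraph F) : #F.edgeFinset = 3 * #G.edgeFinset := by
  rw [← hF.biUnion_spikeTriangle, card_biUnion (by simpa using hF.pairwiseDisjoint_spikeTriangle)]
  rw [sum_congr rfl fun e _ => hF.card_spikeTriangle e, sum_const, card_univ, edgeFinset_card,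
    smul_eq_mul, mul_comm]

theorem card_incidentEdges_eq_sum (hF : G.IsSpikeGraph F) (S : Finset (V ⊕ G.edgeSet)) :
    #(F.incidentEdges S) = ∑ e, #{ed ∈ spikeTriangle F e | ∃ v ∈ S, v ∈ ed} := by
  rw [incidentEdges, ← hF.biUnion_spikeTriangle, filter_biUnion,
    card_biUnion (by simpa using hF.pairwiseDisjoint_spikeTriangle.mono fun e => filter_subset _ _)]

theorem le_card_filter_spikeTriangle (hF : G.IsSpikeGraph F) (S : Finset (V ⊕ G.edgeSet))
    (e : G.edgeSet) :
    (if inr e ∈ S then 1 else 0) + (if ∃ w ∈ (e : Sym2 V), inl w ∈ S then 1 else 0) +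
      (if inr e ∈ S ∨ ∃ w ∈ (e : Sym2 V), inl w ∈ S then 1 else 0) ≤
      #{ed ∈ spikeTriangle F e | ∃ v ∈ S, v ∈ ed} := by
  obtain ⟨⟨u, v⟩, h⟩ := e
  have huv := h.ne
  rw [hF.spikeTriangle_mk h, card_filter, sum_insert (by simp), sum_pair (by simpa)]
  simp only [Sym2.mem_iff, or_and_right, and_or_left, exists_or, exists_eq_left, exists_eq_right]
  split_ifs <;> simp_all

theorem card_toRight_add_card_incidentEdges_add_max_le (hF : G.IsSpikeGraph F)
    (S : Finset (V ⊕ G.edgeSet)) :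
    #S.toRight + #(G.incidentEdges S.toLeft) + max #S.toRight #(G.incidentEdges S.toLeft) ≤
      #(F.incidentEdges S) := by
  have hright : #{e : G.edgeSet | inr e ∈ S} = #S.toRight := by
    congr 1; ext; simp
  have hleft : #{e : G.edgeSet | ∃ w ∈ (e : Sym2 V), inl w ∈ S} =
      #(G.incidentEdges S.toLeft) := by
    rw [incidentEdges, ← card_filter_univ_edgeSet]
    simp only [mem_toLeft, and_comm]
  have hmax : max #{e : G.edgeSet | inr e ∈ S}
      #{e : G.edgeSet | ∃ w ∈ (e : Sym2 V), inl w ∈ S} ≤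
      #{e : G.edgeSet | inr e ∈ S ∨ ∃ w ∈ (e : Sym2 V), inl w ∈ S} := by
    rw [filter_or]
    exact max_le (card_le_card subset_union_left) (card_le_card subset_union_right)
  rw [← hright, ← hleft, hF.card_incidentEdges_eq_sum]
  refine (Nat.add_le_add_left hmax _).trans ?_
  simp only [card_filter _ (univ : Finset G.edgeSet), ← sum_add_distrib]
  exact sum_le_sum fun e _ => hF.le_card_filter_spikeTriangle S e

theorem div_le_card_incidentEdges_div (hF : G.IsSpikeGraph F) {a b : ℝ} (ha : 0 ≤ a)
    (hab : a ≤ b) (hba : b ≤ 2 * a) (hpos : 0 < a + b) {S : Finset (V ⊕ G.edgeSet)}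
    (hS : S.Nonempty) (hbal : b * #S.toLeft ≤ a * #(G.incidentEdges S.toLeft)) :
    3 * b / (a + b) ≤ #(F.incidentEdges S) / #S := by
  have hcount := hF.card_toRight_add_card_incidentEdges_add_max_le S
  rw [← card_toLeft_add_card_toRight, div_le_div_iff₀ hpos
    (by exact_mod_cast card_toLeft_add_card_toRight (u := S) ▸ hS.card_pos)]
  push_cast
  exact three_mul_mul_add_le ha hab hba hbal (by exact_mod_cast hcount)

end IsSpikeGraph

end SimpleGraph

theorem t3_balanced_general {W : Type*} [Fintype W] [DecidableEq W]
    (G2 : SimpleGraph W) [DecidableRel G2.Adj] (R2 : Finset W) (a b : ℕ)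
    (ha : 1 ≤ a) (hab : a + 1 ≤ b) (hba : b ≤ 2 * a)
    (hacard : (Finset.univ \ R2).card = a)
    (hbcard : G2.edgeFinset.card = b)
    (hbal : ∀ S ⊆ Finset.univ \ R2, S.Nonempty →
      (b : ℝ) / a ≤ ((G2.edgeFinset.filter (fun ed => ∃ v ∈ S, v ∈ ed)).card : ℝ) / S.card)
    (F : SimpleGraph (W ⊕ G2.edgeSet))
    (hF1 : ∀ w w' : W, F.Adj (Sum.inl w) (Sum.inl w') ↔ G2.Adj w w')
    (hF2 : ∀ (w : W) (e : G2.edgeSet), F.Adj (Sum.inl w) (Sum.inr e) ↔ w ∈ (e : Sym2 W))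
    (hF3 : ∀ e e' : G2.edgeSet, ¬ F.Adj (Sum.inr e) (Sum.inr e'))
    [DecidableRel F.Adj] [DecidableEq (W ⊕ G2.edgeSet)]
    (R : Finset (W ⊕ G2.edgeSet))
    (hR : R = R2.map ⟨Sum.inl, Sum.inl_injective⟩)
    (d : Finset (W ⊕ G2.edgeSet) → ℝ)
    (hd : ∀ S, d S =
      ((F.edgeFinset.filter (fun ed => ∃ v ∈ S, v ∈ ed)).card : ℝ) / S.card) :
    (∀ S ⊆ Finset.univ \ R, S.Nonempty → d (Finset.univ \ R) ≤ d S) ∧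
    d (Finset.univ \ R) = 3 * (b : ℝ) / ((a : ℝ) + b) := by
  -- the lemmas above are stated for the canonical `DecidableEq` instance on a sum type
  obtain rfl : ‹DecidableEq (W ⊕ G2.edgeSet)› = instDecidableEqSum := Subsingleton.elim _ _
  have hF : G2.IsSpikeGraph F := ⟨hF1, hF2, hF3⟩
  have hd' : ∀ S, d S = #(F.incidentEdges S) / #S := hd
  have hapos : (0 : ℝ) < a := by exact_mod_cast ha
  have hUleft : (univ \ R).toLeft = univ \ R2 := by rw [hR, toLeft_univ_sdiff_map_inl]
  have hcardU : #(univ \ R) = a + b := by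
    rw [← card_toLeft_add_card_toRight, hUleft, hR, toRight_univ_sdiff_map_inl, hacard, card_univ,
      ← SimpleGraph.edgeFinset_card, hbcard]
  have hlower : ∀ S ⊆ univ \ R, S.Nonempty → 3 * (b : ℝ) / (a + b) ≤ d S := by
    intro S hS hne
    have hSW : S.toLeft ⊆ univ \ R2 := hUleft ▸ toLeft_subset_toLeft hS
    rw [hd']
    exact hF.div_le_card_incidentEdges_div hapos.le (by exact_mod_cast (by omega : a ≤ b))
      (by exact_mod_cast hba) (by positivity) hne
      (mul_card_le_of_div_le_div hapos (by positivity) (hbal _ hSW))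
  have hupper : d (univ \ R) ≤ 3 * (b : ℝ) / (a + b) := by
    have hcount : #(F.incidentEdges (univ \ R)) ≤ 3 * b :=
      hbcard ▸ hF.card_edgeFinset ▸ card_le_card (filter_subset _ _)
    rw [hd', hcardU, Nat.cast_add]
    gcongr
    exact_mod_cast hcount
  have hdU := le_antisymm hupper (hlower _ subset_rfl (card_pos.1 (by omega)))
  exact ⟨fun S hS hne => hdU ▸ hlower S hS hne, hdU⟩

/-- `T_3(a,b)` (for `a+1 ≤ b ≤ 2a`), obtained from the Bukh–Conlon tree `T_2(a,b)`
(a balanced rooted tree `G2` with `a` unrooted vertices, `b` edges, independent roots,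
and all unrooted degrees at least `b/a`) by adding for each edge a new unrooted spike
vertex joined to both endpoints, is a balanced rooted graph of rooted density
`3b/(a+b)`. -/
theorem t3_balanced {W : Type*} [Fintype W] [DecidableEq W]
    (G2 : SimpleGraph W) [DecidableRel G2.Adj] (R2 : Finset W) (a b : ℕ)
    (ha : 1 ≤ a) (hab : a + 1 ≤ b) (hba : b ≤ 2 * a)
    (hacard : (Finset.univ \ R2).card = a)
    (hbcard : G2.edgeFinset.card = b)
    (hRind : ∀ u ∈ R2, ∀ v ∈ R2, ¬ G2.Adj u v)
    (hbal : ∀ S ⊆ Finset.univ \ R2, S.Nonempty →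
      (b : ℝ) / a ≤ ((G2.edgeFinset.filter (fun ed => ∃ v ∈ S, v ∈ ed)).card : ℝ) / S.card)
    (hdeg : ∀ w : W, w ∉ R2 → (b : ℝ) / a ≤ (G2.degree w : ℝ))
    (F : SimpleGraph (W ⊕ G2.edgeSet))
    (hF1 : ∀ w w' : W, F.Adj (Sum.inl w) (Sum.inl w') ↔ G2.Adj w w')
    (hF2 : ∀ (w : W) (e : G2.edgeSet), F.Adj (Sum.inl w) (Sum.inr e) ↔ w ∈ (e : Sym2 W))
    (hF3 : ∀ e e' : G2.edgeSet, ¬ F.Adj (Sum.inr e) (Sum.inr e'))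
    [DecidableRel F.Adj] [DecidableEq (W ⊕ G2.edgeSet)]
    (R : Finset (W ⊕ G2.edgeSet))
    (hR : R = R2.map ⟨Sum.inl, Sum.inl_injective⟩)
    (d : Finset (W ⊕ G2.edgeSet) → ℝ)
    (hd : ∀ S, d S =
      ((F.edgeFinset.filter (fun ed => ∃ v ∈ S, v ∈ ed)).card : ℝ) / S.card) :
    (∀ S ⊆ Finset.univ \ R, S.Nonempty → d (Finset.univ \ R) ≤ d S) ∧
    d (Finset.univ \ R) = 3 * (b : ℝ) / ((a : ℝ) + b) :=
  t3_balanced_general G2 R2 a b ha hab hba hacard hbcard hbal F hF1 hF2 hF3 R hR d hd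
end
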